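/- Let (A,Δ) be an algebraic quantum group with left Haar functional φ and antipode S. Then for all a,b ∈ A: (ι⊙φ)((1⊗a)Δ(b)) = S((ι⊙φ)(Δ(a)(1⊗b))). -/

import Mathlib

open TensorProduct LinearMap

noncomputable section

/-- Slice on the left leg: `sliceL θ (x ⊗ y) = θ x • y`, i.e. `(θ ⊙ ι)`. -/
def sliceL {M N : Type*} [AddCommGroup M] [Module ℂ M] [AddCommGroup N] [Module ℂ N]
    (θ : M →ₗ[ℂ] ℂ) : M ⊗[ℂ] N →ₗ[ℂ] N :=
  TensorProduct.lift (LinearMap.lsmul ℂ N ∘ₗ θ)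

/-- Slice on the right leg: `sliceR θ (x ⊗ y) = θ y • x`, i.e. `(ι ⊙ θ)`. -/
def sliceR {M N : Type*} [AddCommGroup M] [Module ℂ M] [AddCommGroup N] [Module ℂ N]
    (θ : N →ₗ[ℂ] ℂ) : M ⊗[ℂ] N →ₗ[ℂ] M :=
  TensorProduct.lift ((LinearMap.lsmul ℂ M ∘ₗ θ).flip)

/-- An algebraic quantum group: a regular multiplier Hopf algebra `(A, Δ)` with a
(faithful) left invariant functional `φ`.  The comultiplication is encoded through the
canonical bijections `T1 a ⊗ b = Δ(a)(b ⊗ 1)`, `T2 (a ⊗ b) = Δ(a)(1 ⊗ b)`,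
`T3 (a ⊗ b) = (b ⊗ 1)Δ(a)`, `T4 (a ⊗ b) = (1 ⊗ b)Δ(a)` together with the left and right
multiplication operators `ΔL a`/`ΔR a` by `Δ(a)` on `A ⊗ A`. -/
structure AQG (A : Type*) [NonUnitalRing A] [Module ℂ A]
    [SMulCommClass ℂ A A] [IsScalarTower ℂ A A] where
  T1 : A ⊗[ℂ] A ≃ₗ[ℂ] A ⊗[ℂ] A
  T2 : A ⊗[ℂ] A ≃ₗ[ℂ] A ⊗[ℂ] A
  T3 : A ⊗[ℂ] A ≃ₗ[ℂ] A ⊗[ℂ] A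
  T4 : A ⊗[ℂ] A ≃ₗ[ℂ] A ⊗[ℂ] A
  counit : A →ₗ[ℂ] ℂ
  S : A ≃ₗ[ℂ] A
  phi : A →ₗ[ℂ] ℂ
  rho : A ≃ₗ[ℂ] A
  ΔL : A →ₗ[ℂ] (A ⊗[ℂ] A →ₗ[ℂ] A ⊗[ℂ] A)
  ΔR : A →ₗ[ℂ] (A ⊗[ℂ] A →ₗ[ℂ] A ⊗[ℂ] A)
  /- non-degeneracy of the algebra `A` -/
  nondeg_l : ∀ a : A, (∀ b : A, a * b = 0) → a = 0
  nondeg_r : ∀ a : A, (∀ b : A, b * a = 0) → a = 0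
  /- the counit is a non-zero homomorphism with `(ε ⊙ ι)Δ = (ι ⊙ ε)Δ = ι` -/
  counit_mul : ∀ a b : A, counit (a * b) = counit a * counit b
  counit_ne : counit ≠ 0
  counit_T1 : ∀ a b : A, sliceR counit (T1 (a ⊗ₜ b)) = a * b
  counit_T2 : ∀ a b : A, sliceL counit (T2 (a ⊗ₜ b)) = a * b
  counit_T3 : ∀ a b : A, sliceR counit (T3 (a ⊗ₜ b)) = b * a
  counit_T4 : ∀ a b : A, sliceL counit (T4 (a ⊗ₜ b)) = b * a
  /- the antipode -/
  S_mul : ∀ a b : A, S (a * b) = S b * S a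
  antipode_l : ∀ a b : A,
    LinearMap.mul' ℂ A (LinearMap.rTensor A S.toLinearMap (T2 (a ⊗ₜ b))) = counit a • b
  antipode_r : ∀ a b : A,
    LinearMap.mul' ℂ A (LinearMap.lTensor A S.toLinearMap (T3 (a ⊗ₜ b))) = counit a • b
  /- `φ` is a faithful left invariant functional -/
  phi_ne : phi ≠ 0
  phi_faithful_l : ∀ a : A, (∀ b : A, phi (a * b) = 0) → a = 0
  phi_faithful_r : ∀ a : A, (∀ b : A, phi (b * a) = 0) → a = 0
  left_inv_T1 : ∀ a b : A, sliceR phi (T1 (a ⊗ₜ b)) = phi a • b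
  left_inv_T3 : ∀ a b : A, sliceR phi (T3 (a ⊗ₜ b)) = phi a • b
  /- the weak KMS automorphism `ρ`: `φ(ab) = φ(b ρ(a))` -/
  rho_mul : ∀ a b : A, rho (a * b) = rho a * rho b
  phi_kms : ∀ a b : A, phi (a * b) = phi (b * rho a)
  /- `Δ` is a (non-degenerate) homomorphism into `M(A ⊗ A)` -/
  ΔL_mul : ∀ (a b : A) (z : A ⊗[ℂ] A), ΔL (a * b) z = ΔL a (ΔL b z)
  ΔR_mul : ∀ (a b : A) (z : A ⊗[ℂ] A), ΔR (a * b) z = ΔR b (ΔR a z)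
  ΔL_assoc : ∀ (a : A) (z w : A ⊗[ℂ] A), ΔL a (z * w) = ΔL a z * w
  ΔR_assoc : ∀ (a : A) (z w : A ⊗[ℂ] A), ΔR a (z * w) = z * ΔR a w
  ΔLR : ∀ (a : A) (z w : A ⊗[ℂ] A), ΔR a z * w = z * ΔL a w
  ΔL_T1 : ∀ (a b : A) (z : A ⊗[ℂ] A),
    T1 (a ⊗ₜ b) * z = ΔL a (TensorProduct.map (LinearMap.mulLeft ℂ b) LinearMap.id z)
  ΔL_T2 : ∀ (a b : A) (z : A ⊗[ℂ] A),
    T2 (a ⊗ₜ b) * z = ΔL a (TensorProduct.map LinearMap.id (LinearMap.mulLeft ℂ b) z)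
  ΔR_T3 : ∀ (a b : A) (z : A ⊗[ℂ] A),
    z * T3 (a ⊗ₜ b) = ΔR a (TensorProduct.map (LinearMap.mulRight ℂ b) LinearMap.id z)
  ΔR_T4 : ∀ (a b : A) (z : A ⊗[ℂ] A),
    z * T4 (a ⊗ₜ b) = ΔR a (TensorProduct.map LinearMap.id (LinearMap.mulRight ℂ b) z)
  /- coassociativity of `Δ` -/
  coassoc : ∀ a b c : A,
    (TensorProduct.assoc ℂ A A A)
        (LinearMap.rTensor A (T3.toLinearMap ∘ₗ (TensorProduct.mk ℂ A A).flip a)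
          (T2 (c ⊗ₜ b)))
      = LinearMap.lTensor A (T2.toLinearMap ∘ₗ (TensorProduct.mk ℂ A A).flip b)
          (T3 (c ⊗ₜ a))

namespace AQG

variable {A : Type*} [NonUnitalRing A] [Module ℂ A]
  [SMulCommClass ℂ A A] [IsScalarTower ℂ A A] (H : AQG A)

/-- The functional `φa : x ↦ φ(x a)`; the dual algebra is `Â = {φa : a ∈ A}`. -/
def lFun (a : A) : A →ₗ[ℂ] ℂ := H.phi ∘ₗ LinearMap.mulRight ℂ a

/-- The functional `aφ : x ↦ φ(a x)`; also `Â = {aφ : a ∈ A}`. -/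
def rFun (a : A) : A →ₗ[ℂ] ℂ := H.phi ∘ₗ LinearMap.mulLeft ℂ a

/-- The right invariant functional `ψ = φ ∘ S`. -/
def psi : A →ₗ[ℂ] ℂ := H.phi ∘ₗ H.S.toLinearMap

/-- The functional `ψa : x ↦ ψ(x a)`. -/
def lFunPsi (a : A) : A →ₗ[ℂ] ℂ := H.psi ∘ₗ LinearMap.mulRight ℂ a

/-- The right action of `Â` on `A'`: `Ract θ a = θ · (φa)`,
`(θ (φa))(x) = θ((ι ⊙ φa)Δ(x)) = θ((ι ⊙ φ)(Δ(x)(1 ⊗ a)))`. -/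
def Ract (θ : A →ₗ[ℂ] ℂ) (a : A) : A →ₗ[ℂ] ℂ :=
  θ ∘ₗ sliceR H.phi ∘ₗ H.T2.toLinearMap ∘ₗ (TensorProduct.mk ℂ A A).flip a

/-- The left action of `Â` on `A'`: `Lact θ a = (φa) · θ`,
`((φa) θ)(x) = θ((φa ⊙ ι)Δ(x)) = θ((φ ⊙ ι)(Δ(x)(a ⊗ 1)))`. -/
def Lact (θ : A →ₗ[ℂ] ℂ) (a : A) : A →ₗ[ℂ] ℂ :=
  θ ∘ₗ sliceL H.phi ∘ₗ H.T1.toLinearMap ∘ₗ (TensorProduct.mk ℂ A A).flip a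

/-- `c = (ι ⊙ θ)Δ(x)` as an element of `A` (a priori it is only a multiplier). -/
def IsRSlice (θ : A →ₗ[ℂ] ℂ) (x c : A) : Prop :=
  (∀ b : A, c * b = sliceR θ (H.T1 (x ⊗ₜ b))) ∧
  (∀ b : A, b * c = sliceR θ (H.T3 (x ⊗ₜ b)))

/-- `c = (θ ⊙ ι)Δ(x)` as an element of `A`. -/
def IsLSlice (θ : A →ₗ[ℂ] ℂ) (x c : A) : Prop :=
  (∀ b : A, c * b = sliceL θ (H.T2 (x ⊗ₜ b))) ∧
  (∀ b : A, b * c = sliceL θ (H.T4 (x ⊗ₜ b)))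

/-- `θ ∈ M(Â)`: all slices `(θ ⊙ ι)Δ(x)` and `(ι ⊙ θ)Δ(x)` belong to `A`. -/
def HasSlices (θ : A →ₗ[ℂ] ℂ) : Prop :=
  ∀ x : A, (∃ c, H.IsRSlice θ x c) ∧ (∃ c, H.IsLSlice θ x c)

end AQG

end

/-! Fix `b` and compare `μ t = S((ι ⊙ φ)(Δ(t)(1 ⊗ b)))` with `ν t = (ι ⊙ φ)((1 ⊗ t)Δ(b))`.
Both satisfy `m(ι ⊙ μ)((a₀ ⊗ 1)Δ(a)) = φ(ab) a₀`: for `ν` this is left invariance applied to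
`(a₀ ⊗ 1)Δ(ab)`; for `μ` coassociativity rewrites the left side as `(ι ⊙ φ)` of
`Σ a₀ a₍₁₎ S(a₍₂₎) ⊗ a₍₃₎ b`, which the antipode identity collapses to `a₀ ⊗ ab`.
The elements `(a₀ ⊗ 1)Δ(a)` span `A ⊗ A` and `A` is non-degenerate, so `μ = ν`. -/

namespace TensorProduct

section

variable {R M N P ι : Type*} [CommSemiring R] [AddCommMonoid M] [Module R M]
  [AddCommMonoid N] [Module R N] [AddCommMonoid P] [Module R P] [Module.Free R M]

theorem eq_zero_of_forall_lTensor_eq_zero (G : ι → N →ₗ[R] P)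
    (hG : ∀ n : N, (∀ i, G i n = 0) → n = 0) {v : M ⊗[R] N}
    (hv : ∀ i, lTensor M (G i) v = 0) : v = 0 := by
  classical
  let b := Module.Free.chooseBasis R M
  have e_lTensor : ∀ (g : N →ₗ[R] P) (w : M ⊗[R] N) j,
      equivFinsuppOfBasisLeft b (lTensor M g w) j = g (equivFinsuppOfBasisLeft b w j) := by
    intro g w j
    induction w using TensorProduct.induction_on with
    | zero => simp
    | tmul x y => simp
    | add p q hp hq => simp only [map_add, Finsupp.add_apply, hp, hq]
  refine (equivFinsuppOfBasisLeft b).injective (Finsupp.ext fun j => hG _ fun i => ?_)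
  rw [← e_lTensor, hv, map_zero, Finsupp.coe_zero, Pi.zero_apply]

theorem eq_zero_of_forall_rTensor_eq_zero (G : ι → N →ₗ[R] P)
    (hG : ∀ n : N, (∀ i, G i n = 0) → n = 0) {v : N ⊗[R] M}
    (hv : ∀ i, rTensor M (G i) v = 0) : v = 0 := by
  refine (TensorProduct.comm R N M).injective ?_
  rw [map_zero]
  refine eq_zero_of_forall_lTensor_eq_zero G hG fun i => ?_
  rw [lTensor_comm, hv, map_zero]

end

section

variable {R A : Type*} [CommSemiring R] [NonUnitalNonAssocSemiring A] [Module R A]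
  [SMulCommClass R A A] [IsScalarTower R A A]

theorem tmul_mul_eq_rTensor_lTensor (c d : A) (z : A ⊗[R] A) :
    (c ⊗ₜ[R] d) * z = rTensor A (mulLeft R c) (lTensor A (mulLeft R d) z) := by
  induction z using TensorProduct.induction_on with
  | zero => simp
  | tmul x y => simp [Algebra.TensorProduct.tmul_mul_tmul]
  | add p q hp hq => simp [mul_add, hp, hq]

theorem mul_tmul_eq_rTensor_lTensor (c d : A) (z : A ⊗[R] A) :
    z * (c ⊗ₜ[R] d) = rTensor A (mulRight R c) (lTensor A (mulRight R d) z) := by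
  induction z using TensorProduct.induction_on with
  | zero => simp
  | tmul x y => simp [Algebra.TensorProduct.tmul_mul_tmul]
  | add p q hp hq => simp [add_mul, hp, hq]

end

section

variable {R A : Type*} [CommSemiring R] [NonUnitalSemiring A] [Module R A]
  [SMulCommClass R A A] [IsScalarTower R A A]

theorem lTensor_mulRight_mul (q : A) (u z : A ⊗[R] A) :
    lTensor A (mulRight R q) u * z = u * lTensor A (mulLeft R q) z := by
  induction u using TensorProduct.induction_on with
  | zero => simp
  | tmul x y =>
      induction z using TensorProduct.induction_on with
      | zero => simp
      | tmul p r => simp [Algebra.TensorProduct.tmul_mul_tmul, mul_assoc]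
      | add p r hp hr => simp only [map_add, mul_add, hp, hr]
  | add p r hp hr => simp only [map_add, add_mul, hp, hr]

theorem rTensor_mulLeft_mul (e : A) (u z : A ⊗[R] A) :
    rTensor A (mulLeft R e) u * z = rTensor A (mulLeft R e) (u * z) := by
  induction u using TensorProduct.induction_on with
  | zero => simp
  | tmul x y =>
      induction z using TensorProduct.induction_on with
      | zero => simp
      | tmul p r => simp [Algebra.TensorProduct.tmul_mul_tmul, mul_assoc]
      | add p r hp hr => simp only [map_add, mul_add, hp, hr]
  | add p r hp hr => simp only [map_add, add_mul, hp, hr]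

end

variable {K A : Type*} [Field K] [NonUnitalNonAssocRing A] [Module K A]
  [SMulCommClass K A A] [IsScalarTower K A A]

theorem eq_of_forall_tmul_mul_eq (hA : ∀ a : A, (∀ b : A, b * a = 0) → a = 0)
    {u v : A ⊗[K] A} (h : ∀ c d : A, (c ⊗ₜ[K] d) * u = (c ⊗ₜ[K] d) * v) : u = v := by
  refine sub_eq_zero.mp <| eq_zero_of_forall_lTensor_eq_zero (mulLeft K) hA fun d =>
    eq_zero_of_forall_rTensor_eq_zero (mulLeft K) hA fun c => ?_
  rw [map_sub, map_sub, ← tmul_mul_eq_rTensor_lTensor, ← tmul_mul_eq_rTensor_lTensor, h,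
    sub_self]

theorem eq_of_forall_mul_tmul_eq (hA : ∀ a : A, (∀ b : A, a * b = 0) → a = 0)
    {u v : A ⊗[K] A} (h : ∀ c d : A, u * (c ⊗ₜ[K] d) = v * (c ⊗ₜ[K] d)) : u = v := by
  refine sub_eq_zero.mp <| eq_zero_of_forall_lTensor_eq_zero (mulRight K) hA fun d =>
    eq_zero_of_forall_rTensor_eq_zero (mulRight K) hA fun c => ?_
  rw [map_sub, map_sub, ← mul_tmul_eq_rTensor_lTensor, ← mul_tmul_eq_rTensor_lTensor, h,
    sub_self]

end TensorProduct

theorem LinearMap.eq_of_mul'_comp_lTensor_eq {R A : Type*} [CommSemiring R]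
    [NonUnitalNonAssocRing A] [Module R A] [SMulCommClass R A A] [IsScalarTower R A A]
    (hA : ∀ a : A, (∀ b : A, b * a = 0) → a = 0) {f g : A →ₗ[R] A}
    (h : mul' R A ∘ₗ lTensor A f = mul' R A ∘ₗ lTensor A g) : f = g := by
  ext t
  refine sub_eq_zero.mp <| hA _ fun c => ?_
  simpa [mul_sub, sub_eq_zero] using LinearMap.congr_fun h (c ⊗ₜ[R] t)

section Slice

variable {M N M' : Type*} [AddCommGroup M] [Module ℂ M] [AddCommGroup N] [Module ℂ N]
  [AddCommGroup M'] [Module ℂ M']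

theorem sliceL_tmul (θ : M →ₗ[ℂ] ℂ) (x : M) (y : N) : sliceL θ (x ⊗ₜ[ℂ] y) = θ x • y := by
  simp [sliceL]

@[simp]
theorem sliceR_tmul (θ : N →ₗ[ℂ] ℂ) (x : M) (y : N) : sliceR θ (x ⊗ₜ[ℂ] y) = θ y • x := by
  simp [sliceR]

theorem sliceR_rTensor (θ : N →ₗ[ℂ] ℂ) (f : M →ₗ[ℂ] M') (v : M ⊗[ℂ] N) :
    sliceR θ (rTensor N f v) = f (sliceR θ v) := by
  induction v using TensorProduct.induction_on with
  | zero => simp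
  | tmul x y => simp
  | add p r hp hr => simp [hp, hr]

end Slice

namespace AQG

variable {A : Type*} [NonUnitalRing A] [Module ℂ A] [SMulCommClass ℂ A A]
  [IsScalarTower ℂ A A] (H : AQG A)

theorem T4_mul (p q : A) (w : A ⊗[ℂ] A) :
    H.T4 (p ⊗ₜ[ℂ] q) * w = lTensor A (mulLeft ℂ q) (H.ΔL p w) := by
  refine TensorProduct.eq_of_forall_tmul_mul_eq H.nondeg_r fun c d => ?_
  rw [← mul_assoc, H.ΔR_T4, H.ΔLR]
  exact lTensor_mulRight_mul q _ _

theorem rTensor_mulLeft_T4 (e b t : A) :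
    rTensor A (mulLeft ℂ e) (H.T4 (b ⊗ₜ[ℂ] t)) = H.ΔR b (e ⊗ₜ[ℂ] t) := by
  refine TensorProduct.eq_of_forall_mul_tmul_eq H.nondeg_l fun c d => ?_
  rw [rTensor_mulLeft_mul, T4_mul, H.ΔLR, tmul_mul_eq_rTensor_lTensor]

theorem ΔR_T3_tmul (a b a₀ : A) : H.ΔR b (H.T3 (a ⊗ₜ[ℂ] a₀)) = H.T3 ((a * b) ⊗ₜ[ℂ] a₀) := by
  refine TensorProduct.eq_of_forall_tmul_mul_eq H.nondeg_r fun c d => ?_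
  rw [← H.ΔR_assoc, H.ΔR_T3, ← H.ΔR_mul, ← H.ΔR_T3]

def mulAntipode : A ⊗[ℂ] A →ₗ[ℂ] A := mul' ℂ A ∘ₗ lTensor A H.S.toLinearMap

@[simp]
theorem mulAntipode_tmul (x y : A) : H.mulAntipode (x ⊗ₜ[ℂ] y) = x * H.S y := by
  simp [mulAntipode]

theorem mulAntipode_T3 (x a₀ : A) : H.mulAntipode (H.T3 (x ⊗ₜ[ℂ] a₀)) = H.counit x • a₀ := by
  simpa [mulAntipode] using H.antipode_r x a₀

/-- `t ↦ S((ι ⊙ φ)(Δ(t)(1 ⊗ b)))`. -/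
def antipodeSliceT2 (b : A) : A →ₗ[ℂ] A :=
  H.S.toLinearMap ∘ₗ sliceR H.phi ∘ₗ H.T2.toLinearMap ∘ₗ (TensorProduct.mk ℂ A A).flip b

/-- `t ↦ (ι ⊙ φ)((1 ⊗ t)Δ(b))`. -/
def sliceT4 (b : A) : A →ₗ[ℂ] A :=
  sliceR H.phi ∘ₗ H.T4.toLinearMap ∘ₗ TensorProduct.mk ℂ A A b

theorem sliceR_rTensor_mulAntipode_assoc_symm (s : A) (u : A ⊗[ℂ] A) :
    sliceR H.phi (rTensor A H.mulAntipode ((TensorProduct.assoc ℂ A A A).symm (s ⊗ₜ[ℂ] u)))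
      = s * H.S (sliceR H.phi u) := by
  induction u using TensorProduct.induction_on with
  | zero => simp
  | tmul p q => simp [mul_smul_comm]
  | add p r hp hr => simp [tmul_add, hp, hr, mul_add]

theorem rTensor_mulAntipode_rTensor_T3 (a₀ : A) (w : A ⊗[ℂ] A) :
    rTensor A H.mulAntipode (rTensor A (H.T3.toLinearMap ∘ₗ (TensorProduct.mk ℂ A A).flip a₀) w)
      = a₀ ⊗ₜ[ℂ] sliceL H.counit w := by
  induction w using TensorProduct.induction_on with
  | zero => simp
  | tmul x y => simp [mulAntipode_T3, sliceL_tmul, TensorProduct.smul_tmul]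
  | add p r hp hr => simp only [map_add, hp, hr, tmul_add]

theorem mul'_lTensor_antipodeSliceT2_T3 (a b a₀ : A) :
    mul' ℂ A (lTensor A (H.antipodeSliceT2 b) (H.T3 (a ⊗ₜ[ℂ] a₀))) = H.phi (a * b) • a₀ := by
  have contract : ∀ v : A ⊗[ℂ] A,
      sliceR H.phi (rTensor A H.mulAntipode ((TensorProduct.assoc ℂ A A A).symm
        (lTensor A (H.T2.toLinearMap ∘ₗ (TensorProduct.mk ℂ A A).flip b) v)))
      = mul' ℂ A (lTensor A (H.antipodeSliceT2 b) v) := by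
    intro v
    induction v using TensorProduct.induction_on with
    | zero => simp
    | tmul s t => exact H.sliceR_rTensor_mulAntipode_assoc_symm s _
    | add p r hp hr => simp only [map_add, hp, hr]
  rw [← contract, ← H.coassoc a₀ b a, LinearEquiv.symm_apply_apply,
    rTensor_mulAntipode_rTensor_T3, H.counit_T2, sliceR_tmul]

theorem mul'_lTensor_sliceT4_T3 (a b a₀ : A) :
    mul' ℂ A (lTensor A (H.sliceT4 b) (H.T3 (a ⊗ₜ[ℂ] a₀))) = H.phi (a * b) • a₀ := by
  have contract : ∀ v : A ⊗[ℂ] A,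
      mul' ℂ A (lTensor A (H.sliceT4 b) v) = sliceR H.phi (H.ΔR b v) := by
    intro v
    induction v using TensorProduct.induction_on with
    | zero => simp
    | tmul s t =>
        rw [lTensor_tmul, mul'_apply, ← rTensor_mulLeft_T4, sliceR_rTensor]
        rfl
    | add p r hp hr => simp only [map_add, hp, hr]
  rw [contract, ΔR_T3_tmul, H.left_inv_T3]

theorem antipodeSliceT2_eq_sliceT4 (b : A) : H.antipodeSliceT2 b = H.sliceT4 b := by
  refine eq_of_mul'_comp_lTensor_eq H.nondeg_r <|
    (cancel_right (f := _ ∘ₗ _) H.T3.surjective).mp <| TensorProduct.ext' fun a a₀ => ?_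
  simp only [comp_apply, LinearEquiv.coe_coe, mul'_lTensor_antipodeSliceT2_T3,
    mul'_lTensor_sliceT4_T3]

end AQG

/-- `(ι ⊙ φ)((1 ⊗ a)Δ(b)) = S((ι ⊙ φ)(Δ(a)(1 ⊗ b)))` for all `a, b ∈ A`. -/
theorem AQG.phi_antipode_identity {A : Type*} [NonUnitalRing A] [Module ℂ A]
    [SMulCommClass ℂ A A] [IsScalarTower ℂ A A] (H : AQG A) (a b : A) :
    sliceR H.phi (H.T4 (b ⊗ₜ a)) = H.S (sliceR H.phi (H.T2 (a ⊗ₜ b))) :=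
  (LinearMap.congr_fun (H.antipodeSliceT2_eq_sliceT4 b) a).symm
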